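/- Let γ > 1 be real. For the set ℕ^γ = {⌊K^γ⌋ : K ∈ ℕ} \ {0}, and for N a natural number with N - T - M(T-1) ≥ 1 where T = ⌊N^t⌋, M = ⌊N^m⌋ with 0 < t, 0 < m, m + t < 1, define N' = max{n ∈ ℕ^γ : n ≤ N - T - M(T-1)}. Then N - N' = O(N^{1-1/γ} + N^{m+t}) as N → ∞. -/

import Mathlib

open Real

/-- The set `ℕ^γ = {⌊K^γ⌋ : K ∈ ℕ} \ {0}`. -/
def NgammaSet (γ : ℝ) : Set ℕ := {n : ℕ | n ≠ 0 ∧ ∃ K : ℕ, n = ⌊(K : ℝ) ^ γ⌋₊}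

/-!
Write `S = T + M(T-1)`. Since `T ≤ N^t` and `M ≤ N^m`, `S ≤ 2 N^(m+t)`, which is at most `N / 2`
for large `N` because `m + t < 1`; so `B = N - S` is positive and `N - B = O(N^(m+t))`.
For the gap `B - N'`, take `K = ⌊B^(1/γ)⌋`: by Bernoulli's inequality
`K^γ ≥ (B^(1/γ) - 1)^γ ≥ B - γ B^(1-1/γ)`, so `⌊K^γ⌋` is an element of `ℕ^γ` below `B`
within `γ B^(1-1/γ) + 1 ≤ γ N^(1-1/γ) + 1` of it.
-/

lemma rpow_sub_mul_rpow_sub_one_le_sub_one_rpow {x p : ℝ} (hx : 1 ≤ x) (hp : 1 ≤ p) :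
    x ^ p - p * x ^ (p - 1) ≤ (x - 1) ^ p := by
  have hx0 : 0 < x := by linarith
  have hinv : 1 / x ≤ 1 := (div_le_one hx0).2 hx
  have bernoulli : 1 - p / x ≤ (1 - 1 / x) ^ p := by
    have := one_add_mul_self_le_rpow_one_add (s := -(1 / x)) (by linarith) hp
    convert this using 1 <;> ring_nf
  calc x ^ p - p * x ^ (p - 1) = x ^ p * (1 - p / x) := by
        rw [rpow_sub hx0, rpow_one]; field_simp
    _ ≤ x ^ p * (1 - 1 / x) ^ p := by gcongr
    _ = (x - 1) ^ p := by
        rw [← mul_rpow hx0.le (by linarith)]; congr 1; field_simp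

lemma exists_mem_NgammaSet_close_below {γ : ℝ} (hγ : 1 ≤ γ) {B : ℕ} (hB : 1 ≤ B) :
    ∃ n ∈ NgammaSet γ, n ≤ B ∧ (B : ℝ) - γ * (B : ℝ) ^ (1 - 1 / γ) - 1 ≤ n := by
  have hγ0 : 0 < γ := by linarith
  have hB1 : (1 : ℝ) ≤ B := by exact_mod_cast hB
  set x := (B : ℝ) ^ (1 / γ)
  have hx1 : 1 ≤ x := one_le_rpow hB1 (by positivity)
  have hxγ : x ^ γ = B := by
    rw [← rpow_mul (by positivity), one_div_mul_cancel hγ0.ne', rpow_one]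
  have hxγ1 : x ^ (γ - 1) = (B : ℝ) ^ (1 - 1 / γ) := by
    rw [← rpow_mul (by positivity)]; congr 1; field_simp
  set K := ⌊x⌋₊
  have hK1 : (1 : ℝ) ≤ K := by exact_mod_cast Nat.le_floor (by exact_mod_cast hx1)
  have hKx : (K : ℝ) ≤ x := Nat.floor_le (by linarith)
  refine ⟨⌊(K : ℝ) ^ γ⌋₊, ⟨?_, K, rfl⟩, ?_, ?_⟩
  · exact (Nat.floor_pos.2 (one_le_rpow hK1 hγ0.le)).ne'
  · rw [← Nat.floor_natCast (R := ℝ) B, ← hxγ]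
    exact Nat.floor_le_floor (by gcongr)
  · have hK : (x - 1) ^ γ ≤ (K : ℝ) ^ γ :=
      rpow_le_rpow (by linarith) (Nat.sub_one_lt_floor x).le hγ0.le
    have := rpow_sub_mul_rpow_sub_one_le_sub_one_rpow hx1 hγ
    have := Nat.sub_one_lt_floor ((K : ℝ) ^ γ)
    rw [hxγ, hxγ1] at *
    linarith

lemma natCast_sub_sSup_NgammaSet_le {γ : ℝ} (hγ : 1 ≤ γ) {B : ℕ} (hB : 1 ≤ B) :
    (B : ℝ) - (sSup {n ∈ NgammaSet γ | n ≤ B} : ℕ) ≤ γ * (B : ℝ) ^ (1 - 1 / γ) + 1 := by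
  obtain ⟨n, hn, hnB, hgap⟩ := exists_mem_NgammaSet_close_below hγ hB
  have : n ≤ sSup {n ∈ NgammaSet γ | n ≤ B} := le_csSup ⟨B, fun _ h ↦ h.2⟩ ⟨hn, hnB⟩
  have : (n : ℝ) ≤ (sSup {n ∈ NgammaSet γ | n ≤ B} : ℕ) := by exact_mod_cast this
  linarith

lemma natCast_floor_rpow_add_floor_rpow_mul_le {x t m : ℝ} (hx : 1 ≤ x) (hm : 0 ≤ m) :
    ((⌊x ^ t⌋₊ + ⌊x ^ m⌋₊ * (⌊x ^ t⌋₊ - 1) : ℕ) : ℝ) ≤ 2 * x ^ (m + t) := by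
  have hT : (⌊x ^ t⌋₊ : ℝ) ≤ x ^ t := Nat.floor_le (by positivity)
  have hM : (⌊x ^ m⌋₊ : ℝ) ≤ x ^ m := Nat.floor_le (by positivity)
  have hS : ⌊x ^ t⌋₊ + ⌊x ^ m⌋₊ * (⌊x ^ t⌋₊ - 1) ≤ ⌊x ^ t⌋₊ + ⌊x ^ m⌋₊ * ⌊x ^ t⌋₊ := by
    gcongr; exact Nat.sub_le _ _
  calc ((⌊x ^ t⌋₊ + ⌊x ^ m⌋₊ * (⌊x ^ t⌋₊ - 1) : ℕ) : ℝ)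
      ≤ ⌊x ^ t⌋₊ + ⌊x ^ m⌋₊ * ⌊x ^ t⌋₊ := by exact_mod_cast hS
    _ ≤ x ^ t + x ^ m * x ^ t := by gcongr
    _ ≤ x ^ (m + t) + x ^ (m + t) := by
        rw [← rpow_add (by linarith)]
        gcongr
        linarith
    _ = 2 * x ^ (m + t) := by ring

lemma eventually_mul_rpow_le_self {s : ℝ} (hs : s < 1) (c : ℝ) :
    ∀ᶠ x : ℝ in Filter.atTop, c * x ^ s ≤ x := by
  filter_upwards [(tendsto_rpow_atTop (sub_pos.2 hs)).eventually_ge_atTop c,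
    Filter.eventually_gt_atTop 0] with x hc hx
  calc c * x ^ s ≤ x ^ (1 - s) * x ^ s := by gcongr
    _ = x := by rw [← rpow_add hx, sub_add_cancel, rpow_one]

theorem N_minus_Nprime_bigO_general (γ t m : ℝ) (hγ : 1 < γ) (hm : 0 < m)
    (hmt : m + t < 1) :
    ∃ C > (0:ℝ), ∃ N₀ : ℕ, ∀ N : ℕ, N₀ ≤ N →
      1 ≤ N - ⌊(N:ℝ)^t⌋₊ - ⌊(N:ℝ)^m⌋₊ * (⌊(N:ℝ)^t⌋₊ - 1) ∧
      (N : ℝ) -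
        (sSup {n ∈ NgammaSet γ |
            n ≤ N - ⌊(N:ℝ)^t⌋₊ - ⌊(N:ℝ)^m⌋₊ * (⌊(N:ℝ)^t⌋₊ - 1)} : ℕ)
        ≤ C * ((N:ℝ) ^ (1 - 1/γ) + (N:ℝ) ^ (m + t)) := by
  obtain ⟨N₀, hN₀⟩ := Filter.eventually_atTop.1 <| tendsto_natCast_atTop_atTop.eventually <|
    (Filter.eventually_ge_atTop (2 : ℝ)).and (eventually_mul_rpow_le_self hmt 4)
  refine ⟨γ + 2, by linarith, N₀, fun N hN ↦ ?_⟩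
  obtain ⟨hN2, hN⟩ := hN₀ N hN
  rw [Nat.sub_sub]
  set S := ⌊(N:ℝ)^t⌋₊ + ⌊(N:ℝ)^m⌋₊ * (⌊(N:ℝ)^t⌋₊ - 1)
  have hS : (S : ℝ) ≤ 2 * (N:ℝ) ^ (m + t) :=
    natCast_floor_rpow_add_floor_rpow_mul_le (by linarith) hm.le
  have hSN : S + 1 ≤ N := by exact_mod_cast (show (S : ℝ) + 1 ≤ N by linarith)
  refine ⟨by omega, ?_⟩
  have hexp : 0 ≤ 1 - 1 / γ := sub_nonneg.2 ((div_le_one (by linarith)).2 hγ.le)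
  have hgap := natCast_sub_sSup_NgammaSet_le hγ.le (show 1 ≤ N - S by omega)
  have hB : ((N - S : ℕ) : ℝ) = N - S := Nat.cast_sub (by omega)
  have hpow : γ * ((N - S : ℕ) : ℝ) ^ (1 - 1 / γ) ≤ γ * (N : ℝ) ^ (1 - 1 / γ) := by
    gcongr; exact Nat.sub_le N S
  have hone : 1 ≤ (N : ℝ) ^ (1 - 1 / γ) := one_le_rpow (by linarith) hexp
  have : 0 ≤ γ * (N : ℝ) ^ (m + t) := by positivity
  linarith

theorem N_minus_Nprime_bigO (γ t m : ℝ) (hγ : 1 < γ) (ht : 0 < t) (hm : 0 < m)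
    (hmt : m + t < 1) :
    ∃ C > (0:ℝ), ∃ N₀ : ℕ, ∀ N : ℕ, N₀ ≤ N →
      1 ≤ N - ⌊(N:ℝ)^t⌋₊ - ⌊(N:ℝ)^m⌋₊ * (⌊(N:ℝ)^t⌋₊ - 1) ∧
      (N : ℝ) -
        (sSup {n ∈ NgammaSet γ |
            n ≤ N - ⌊(N:ℝ)^t⌋₊ - ⌊(N:ℝ)^m⌋₊ * (⌊(N:ℝ)^t⌋₊ - 1)} : ℕ)
        ≤ C * ((N:ℝ) ^ (1 - 1/γ) + (N:ℝ) ^ (m + t)) :=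
  N_minus_Nprime_bigO_general γ t m hγ hm hmt
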